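/- (The Kerr splitting identity, Example 3.20 with m = 1/2.) On ℍ°, with r := √(ρ²+z²), define Φ^∞ := ((2r+1)ρ)⁻¹ [[2r, −(r+z)],[−(r+z), (r+z)(ρ² + (r−z+1)²)]], and define Φ^{TN⁺} := ρ⁻¹[[H⁻¹, H⁻¹A],[H⁻¹A, Hρ² + H⁻¹A²]] with H := 1 + 1/(2r) and A := z/(2r). Then Φ^∞ is symmetric with det Φ^∞ ≡ 1, and for all (ρ,z) ∈ ℍ°: U_{1/2}ᵀ · Φ^∞(ρ,z) · U_{1/2} = Φ^{TN⁺}(ρ, −z), where U_{1/2} := [[1, 1/2],[0, 1]]; that is, U_{−1/2}.Φ^∞ = η*Φ^{TN⁺} with η(ρ,z) = (ρ,−z). -/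

import Mathlib

noncomputable section

open Real Topology Filter Matrix MeasureTheory

abbrev Mat2 : Type := Matrix (Fin 2) (Fin 2) ℝ

/-- Partial derivative in the first variable (`ρ`). -/
def pd1 (f : ℝ × ℝ → ℝ) (p : ℝ × ℝ) : ℝ := deriv (fun t => f (t, p.2)) p.1

/-- Partial derivative in the second variable (`z`). -/
def pd2 (f : ℝ × ℝ → ℝ) (p : ℝ × ℝ) : ℝ := deriv (fun t => f (p.1, t)) p.2

/-- Entrywise partial derivative (in `ρ`) of a matrix-valued function. -/
def mpd1 (F : ℝ × ℝ → Mat2) (p : ℝ × ℝ) : Mat2 :=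
  Matrix.of fun i j => pd1 (fun q => F q i j) p

/-- Entrywise partial derivative (in `z`) of a matrix-valued function. -/
def mpd2 (F : ℝ × ℝ → Mat2) (p : ℝ × ℝ) : Mat2 :=
  Matrix.of fun i j => pd2 (fun q => F q i j) p

/-- The open right half plane `ℍ° = {(ρ, z) : ρ > 0}`. -/
def Hplane : Set (ℝ × ℝ) := {p | 0 < p.1}

/-- A matrix-valued map is smooth on a set if each entry is `C^∞` there. -/
def SmoothMatOn (F : ℝ × ℝ → Mat2) (U : Set (ℝ × ℝ)) : Prop :=
  ∀ i j, ContDiffOn ℝ (⊤ : ℕ∞) (fun q => F q i j) U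

/-- The axisymmetric harmonic-map equation
`∂_ρ(ρ Φ⁻¹ ∂_ρΦ) + ∂_z(ρ Φ⁻¹ ∂_zΦ) = 0` on `U`. -/
def axiHarmonicOn (Φ : ℝ × ℝ → Mat2) (U : Set (ℝ × ℝ)) : Prop :=
  ∀ p ∈ U,
    mpd1 (fun q => q.1 • ((Φ q)⁻¹ * mpd1 Φ q)) p +
      mpd2 (fun q => q.1 • ((Φ q)⁻¹ * mpd2 Φ q)) p = 0

/-- `𝒰 := I + ρ Φ⁻¹ ∂_ρΦ`. -/
def Umat (Φ : ℝ × ℝ → Mat2) (p : ℝ × ℝ) : Mat2 := 1 + p.1 • ((Φ p)⁻¹ * mpd1 Φ p)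

/-- `𝒱 := ρ Φ⁻¹ ∂_zΦ`. -/
def Vmat (Φ : ℝ × ℝ → Mat2) (p : ℝ × ℝ) : Mat2 := p.1 • ((Φ p)⁻¹ * mpd2 Φ p)

/-- `ν` is an augmentation for `Φ` on `U`. -/
def IsAugmentationOn (Φ : ℝ × ℝ → Mat2) (ν : ℝ × ℝ → ℝ) (U : Set (ℝ × ℝ)) : Prop :=
  ContDiffOn ℝ (⊤ : ℕ∞) ν U ∧ ∀ p ∈ U,
    pd2 ν p = (4 * p.1)⁻¹ * (Umat Φ p * Vmat Φ p).trace ∧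
    pd1 ν p = -(2 * p.1)⁻¹ +
      (8 * p.1)⁻¹ * (Umat Φ p * Umat Φ p - Vmat Φ p * Vmat Φ p).trace

/-- `r = √(ρ² + z²)`. -/
def rr (p : ℝ × ℝ) : ℝ := Real.sqrt (p.1 ^ 2 + p.2 ^ 2)

/-- The action `P.Φ := (P⁻¹)ᵀ Φ P⁻¹` of `GL(2,ℝ)` on matrices. -/
def matAct (P M : Mat2) : Mat2 := (P⁻¹)ᵀ * M * P⁻¹

/-- The action of `GL(2,ℝ)` on matrix-valued maps. -/
def mapAct (P : Mat2) (Φ : ℝ × ℝ → Mat2) : ℝ × ℝ → Mat2 := fun q => matAct P (Φ q)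

/-- `H = 1 + 1/(2r)`. -/
def Hk (p : ℝ × ℝ) : ℝ := 1 + 1 / (2 * rr p)

/-- `A = z/(2r)`. -/
def Ak (p : ℝ × ℝ) : ℝ := p.2 / (2 * rr p)

/-- The pointed limit `Φ^∞` of the Euclidean Kerr harmonic maps (with `m = 1/2`). -/
def ΦKerrInf (p : ℝ × ℝ) : Mat2 :=
  ((2 * rr p + 1) * p.1)⁻¹ •
    !![2 * rr p, -(rr p + p.2);
       -(rr p + p.2), (rr p + p.2) * (p.1 ^ 2 + (rr p - p.2 + 1) ^ 2)]

/-- The Taub-NUT harmonic map `Φ^{TN⁺} = ρ⁻¹[[H⁻¹, H⁻¹A],[H⁻¹A, Hρ² + H⁻¹A²]]`. -/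
def ΦTNp (p : ℝ × ℝ) : Mat2 :=
  p.1⁻¹ • !![(Hk p)⁻¹, (Hk p)⁻¹ * Ak p;
             (Hk p)⁻¹ * Ak p, Hk p * p.1 ^ 2 + (Hk p)⁻¹ * (Ak p) ^ 2]

/-- `U_μ = [[1, μ],[0, 1]]`. -/
def UM (μ : ℝ) : Mat2 := !![1, μ; 0, 1]

/-! Everything rests on `r² = ρ² + z²`, which turns the corner entry `(r+z)(ρ² + (r−z+1)²)` of
`Φ^∞` into `2(r+1)ρ² + r + z`. In this form `det Φ^∞ = 1` is a polynomial identity, and the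
congruence by the shear `U_{1/2}` and the substitution `H = (2r+1)/(2r)`, `A = −z/(2r)` in
`Φ^{TN⁺}(ρ,−z)` both produce `((2r+1)ρ)⁻¹ [[2r, −z], [−z, 2(r+1)ρ² + r/2]]`. -/

lemma rr_sq (p : ℝ × ℝ) : rr p ^ 2 = p.1 ^ 2 + p.2 ^ 2 :=
  Real.sq_sqrt (by positivity)

lemma rr_pos {p : ℝ × ℝ} (hp : p.1 ≠ 0) : 0 < rr p :=
  Real.sqrt_pos.mpr (by positivity)

lemma rr_neg_snd (ρ z : ℝ) : rr (ρ, -z) = rr (ρ, z) := by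
  simp [rr]

lemma UM_mul_UM (μ ν : ℝ) : UM μ * UM ν = UM (μ + ν) := by
  simp [UM, add_comm]

lemma UM_zero : UM 0 = 1 := by
  simp [UM, Matrix.one_fin_two]

lemma inv_UM (μ : ℝ) : (UM μ)⁻¹ = UM (-μ) :=
  Matrix.inv_eq_right_inv (by rw [UM_mul_UM, add_neg_cancel, UM_zero])

lemma matAct_UM_neg (μ : ℝ) (M : Mat2) : matAct (UM (-μ)) M = (UM μ)ᵀ * M * UM μ := by
  rw [matAct, inv_UM, neg_neg]

lemma UM_transpose (μ : ℝ) : (UM μ)ᵀ = !![1, 0; μ, 1] := by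
  ext i j; fin_cases i <;> fin_cases j <;> rfl

lemma UM_transpose_mul_mul_UM (μ a b d : ℝ) :
    (UM μ)ᵀ * !![a, b; b, d] * UM μ =
      !![a, μ * a + b; μ * a + b, μ ^ 2 * a + 2 * μ * b + d] := by
  rw [UM_transpose, UM, Matrix.mul_fin_two, Matrix.mul_fin_two]
  ext i j
  fin_cases i <;> fin_cases j <;> simp <;> ring

lemma isSymm_of_fin_two {α : Type*} (a b d : α) : (!![a, b; b, d]).IsSymm := by
  ext i j; fin_cases i <;> fin_cases j <;> rfl

lemma kerr_corner_eq {ρ z r : ℝ} (hr : r ^ 2 = ρ ^ 2 + z ^ 2) :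
    (r + z) * (ρ ^ 2 + (r - z + 1) ^ 2) = 2 * (r + 1) * ρ ^ 2 + (r + z) := by
  linear_combination (r - z + 2) * hr

lemma ΦKerrInf_eq (p : ℝ × ℝ) :
    ΦKerrInf p = ((2 * rr p + 1) * p.1)⁻¹ •
      !![2 * rr p, -(rr p + p.2); -(rr p + p.2), 2 * (rr p + 1) * p.1 ^ 2 + (rr p + p.2)] := by
  rw [ΦKerrInf, kerr_corner_eq (rr_sq p)]

lemma ΦKerrInf_isSymm (p : ℝ × ℝ) : (ΦKerrInf p).IsSymm :=
  (isSymm_of_fin_two _ _ _).smul _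

lemma det_ΦKerrInf {p : ℝ × ℝ} (hp : p.1 ≠ 0) : (ΦKerrInf p).det = 1 := by
  have hr : 0 < 2 * rr p + 1 := by linarith [rr_pos hp]
  rw [ΦKerrInf_eq, Matrix.det_smul, Matrix.det_fin_two_of, Fintype.card_fin]
  field_simp
  linear_combination rr_sq p

lemma ΦTNp_neg_snd {ρ z : ℝ} (hρ : ρ ≠ 0) :
    ΦTNp (ρ, -z) = ((2 * rr (ρ, z) + 1) * ρ)⁻¹ •
      !![2 * rr (ρ, z), -z; -z, 2 * (rr (ρ, z) + 1) * ρ ^ 2 + rr (ρ, z) / 2] := by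
  have hr := rr_sq (ρ, z)
  have hr0 : 0 < rr (ρ, z) := rr_pos hρ
  simp only [ΦTNp, Hk, Ak, rr_neg_snd]
  set r := rr (ρ, z)
  have h2r : 2 * r + 1 ≠ 0 := by positivity
  ext i j
  fin_cases i <;> fin_cases j <;> simp <;> field_simp
  linear_combination -hr

theorem UM_transpose_mul_ΦKerrInf_mul_UM {p : ℝ × ℝ} (hp : p.1 ≠ 0) :
    (UM (1 / 2))ᵀ * ΦKerrInf p * UM (1 / 2) = ΦTNp (p.1, -p.2) := by
  rw [ΦKerrInf_eq, Matrix.mul_smul, Matrix.smul_mul, UM_transpose_mul_mul_UM, ΦTNp_neg_snd hp]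
  have h01 : 1 / 2 * (2 * rr p) + -(rr p + p.2) = -p.2 := by ring
  have h11 : (1 / 2) ^ 2 * (2 * rr p) + 2 * (1 / 2) * -(rr p + p.2) +
      (2 * (rr p + 1) * p.1 ^ 2 + (rr p + p.2)) = 2 * (rr p + 1) * p.1 ^ 2 + rr p / 2 := by ring
  rw [h01, h11]

/-- **the Kerr splitting identity, Example 3.20 with `m = 1/2`.**
`Φ^∞` is symmetric of determinant `1`, and `U_{1/2}ᵀ · Φ^∞(ρ,z) · U_{1/2} = Φ^{TN⁺}(ρ,−z)`
on `ℍ°`; i.e. `U_{−1/2}.Φ^∞ = η*Φ^{TN⁺}` with `η(ρ,z) = (ρ,−z)`. -/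
theorem stmt18 :
    ∀ p ∈ Hplane,
      (ΦKerrInf p).IsSymm ∧
      (ΦKerrInf p).det = 1 ∧
      (UM (1 / 2))ᵀ * ΦKerrInf p * UM (1 / 2) = ΦTNp (p.1, -p.2) ∧
      matAct (UM (-(1 / 2))) (ΦKerrInf p) = ΦTNp (p.1, -p.2) := by
  intro p hp
  have hρ : p.1 ≠ 0 := ne_of_gt hp
  have hshear := UM_transpose_mul_ΦKerrInf_mul_UM hρ
  exact ⟨ΦKerrInf_isSymm p, det_ΦKerrInf hρ, hshear, by rwa [matAct_UM_neg]⟩
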